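/- Let R be a ring. The class GP^⊥ = {M : Ext^1_R(X, M) = 0 for all Gorenstein projective X} is thick: it is closed under direct summands, and for every short exact sequence 0 → M' → M → M'' → 0 of R-modules, if two of the three modules lie in GP^⊥ then so does the third. -/

import Mathlib

open CategoryTheory Opposite

universe u

variable {R : Type u} [Ring R]

/-- A chain complex of modules is totally acyclic if all its terms are projective, it is
exact, and applying `Hom(-, Q)` gives an exact complex for every projective module `Q`. -/
def IsTotallyAcyclic {R : Type u} [Ring R] (P : ChainComplex (ModuleCat.{u} R) ℤ) : Prop :=
  (∀ i, Projective (P.X i)) ∧ (∀ i, P.ExactAt i) ∧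
    (∀ Q : ModuleCat.{u} R, Projective Q → ∀ i,
      ((((preadditiveYoneda.obj Q).mapHomologicalComplex _).obj P.op).ExactAt i))

/-- A module is Gorenstein projective if it is a kernel (cycle) in a totally acyclic
complex of projectives. -/
def IsGorensteinProjective {R : Type u} [Ring R] (M : ModuleCat.{u} R) : Prop :=
  ∃ P : ChainComplex (ModuleCat.{u} R) ℤ, IsTotallyAcyclic P ∧ Nonempty (M ≅ P.cycles 0)

/-- Vanishing of `Ext^n_R(X, M)` (as an abelian group). -/
abbrev extVanishes (n : ℕ) (X M : ModuleCat.{u} R) : Prop :=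
  Subsingleton (((Ext ℤ (ModuleCat.{u} R) n).obj (op X)).obj M)

/-- Membership in the right `Ext^1`-orthogonal `GP^⊥` of the Gorenstein projectives. -/
def MemGPperp (M : ModuleCat.{u} R) : Prop :=
  ∀ X : ModuleCat.{u} R, IsGorensteinProjective X → extVanishes 1 X M

/-!
Shifting a totally acyclic complex `P` shows that every cycle module `Z_k(P)` is Gorenstein
projective, and the truncation `P_{≥ 1}` is a projective resolution of `Z_0(P)`, so that
`Ext¹(Z_0(P), M) = 0` says exactly that `Hom(P, M)` is exact in degree `2`. Hence `M ∈ GP^⊥` if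
and only if `Hom(P, M)` is acyclic for every totally acyclic `P`. As the `P_i` are projective, a
short exact sequence of modules induces a short exact sequence of complexes `Hom(P, -)`, and
two-out-of-three follows from the long exact homology sequence. Summands are handled by the
functoriality of `Ext`.
-/

universe v

open Limits

namespace HomologicalComplex

section Restriction

variable {ι ι' : Type*} {c : ComplexShape ι} {c' : ComplexShape ι'} {C : Type*} [Category.{v} C]
  [HasZeroMorphisms C] [CategoryWithHomology C]

lemma exactAt_restriction_iff (K : HomologicalComplex C c') (e : c.Embedding c') [e.IsRelIff]
    {i j k : ι} (hi : c.prev j = i) (hk : c.next j = k)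
    (hi' : c'.prev (e.f j) = e.f i) (hk' : c'.next (e.f j) = e.f k) :
    (K.restriction e).ExactAt j ↔ K.ExactAt (e.f j) := by
  simp only [exactAt_iff_isZero_homology]
  exact (K.restrictionHomologyIso e i j k hi hk rfl rfl rfl hi' hk').isZero_iff

end Restriction

section ToCycles

variable {ι : Type*} {c : ComplexShape ι} {C : Type*} [Category.{v} C] [Preadditive C]
  [CategoryWithHomology C] (K : HomologicalComplex C c) {i j k : ι}

lemma epi_toCycles_of_exactAt (hi : c.prev j = i) (h : K.ExactAt j) :
    Epi (K.toCycles i j) := by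
  rw [(Iso.eq_comp_inv _).2 (K.toCycles_cyclesIsoSc'_hom i j (c.next j) hi rfl)]
  exact epi_comp' ((K.exactAt_iff' i j (c.next j) hi rfl).1 h).epi_toCycles inferInstance

lemma exact_d_toCycles_of_exactAt (hi : c.prev j = i) (hk : c.next j = k) (h : K.ExactAt j) :
    (ShortComplex.mk (K.d i j) (K.toCycles j k) (K.d_toCycles i j k)).Exact := by
  let φ : ShortComplex.mk (K.d i j) (K.toCycles j k) (K.d_toCycles i j k) ⟶ K.sc' i j k :=
    { τ₁ := 𝟙 _, τ₂ := 𝟙 _, τ₃ := K.iCycles k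
      comm₁₂ := by simp [sc', shortComplexFunctor']
      comm₂₃ := by simp [sc', shortComplexFunctor'] }
  have : Epi φ.τ₁ := inferInstanceAs (Epi (𝟙 _))
  have : IsIso φ.τ₂ := inferInstanceAs (IsIso (𝟙 _))
  have : Mono φ.τ₃ := inferInstanceAs (Mono (K.iCycles k))
  exact (ShortComplex.exact_iff_of_epi_of_isIso_of_mono φ).2 ((K.exactAt_iff' i j k hi hk).1 h)

end ToCycles

section Acyclic

variable {ι : Type*} {c : ComplexShape ι} {C : Type*} [Category.{v} C] [Abelian C]

lemma quasiIso_of_acyclic {K L : HomologicalComplex C c} (f : K ⟶ L) (hK : K.Acyclic)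
    (hL : L.Acyclic) : QuasiIso f :=
  ⟨fun i => (quasiIsoAt_iff_exactAt f i (hK i)).2 (hL i)⟩

end Acyclic

end HomologicalComplex

namespace CategoryTheory.ShortComplex.ShortExact

section Acyclic

variable {ι : Type*} {c : ComplexShape ι} {C : Type*} [Category.{v} C] [Abelian C]
  {S : ShortComplex (HomologicalComplex C c)} (hS : S.ShortExact)
include hS

lemma acyclic_X₁_of_acyclic (h₂ : S.X₂.Acyclic) (h₃ : S.X₃.Acyclic) : S.X₁.Acyclic :=
  hS.acyclic_X₁ (HomologicalComplex.quasiIso_of_acyclic _ h₂ h₃)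

lemma acyclic_X₃_of_acyclic (h₁ : S.X₁.Acyclic) (h₂ : S.X₂.Acyclic) : S.X₃.Acyclic :=
  hS.acyclic_X₃ (HomologicalComplex.quasiIso_of_acyclic _ h₁ h₂)

end Acyclic

lemma preadditiveYoneda_app_of_projective {C : Type*} [Category.{v} C] [Abelian C]
    {S : ShortComplex C} (hS : S.ShortExact) (Q : C) [Projective Q] :
    (ShortComplex.mk ((preadditiveYoneda.map S.f).app (Opposite.op Q))
      ((preadditiveYoneda.map S.g).app (Opposite.op Q))
      (by rw [← NatTrans.comp_app, ← Functor.map_comp, S.zero, Functor.map_zero,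
        NatTrans.app_zero])).ShortExact := by
  have := hS.mono_f
  have := hS.epi_g
  refine .mk' ?_ ?_ ?_
  · rw [ShortComplex.ab_exact_iff]
    intro (x : Q ⟶ S.X₂) (hx : x ≫ S.g = 0)
    exact ⟨hS.exact.lift x hx, hS.exact.lift_f x hx⟩
  · rw [AddCommGrpCat.mono_iff_injective]
    intro (x : Q ⟶ S.X₁) (y : Q ⟶ S.X₁) (h : x ≫ S.f = y ≫ S.f)
    exact cancel_mono S.f |>.1 h
  · rw [AddCommGrpCat.epi_iff_surjective]
    intro (x : Q ⟶ S.X₃)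
    exact ⟨Projective.factorThru x S.g, Projective.factorThru_comp x S.g⟩

end CategoryTheory.ShortComplex.ShortExact

namespace ComplexShape

@[simps]
def embeddingDownIntAdd (k : ℤ) : (down ℤ).Embedding (down ℤ) where
  f := (· + k)
  injective_f := add_left_injective k
  rel {i j} (h : j + 1 = i) := show j + k + 1 = i + k by omega

instance (k : ℤ) : (embeddingDownIntAdd k).IsRelIff where
  rel' i j (h : j + k + 1 = i + k) := show j + 1 = i by omega

@[simps]
def embeddingDownIntGE (p : ℤ) : (down ℕ).Embedding (down ℤ) where
  f n := p + n
  injective_f i j h := by simpa using h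
  rel {i j} (h : j + 1 = i) := show p + j + 1 = p + i by omega

instance (p : ℤ) : (embeddingDownIntGE p).IsRelIff where
  rel' i j (h : p + j + 1 = p + i) := show j + 1 = i by omega

end ComplexShape

noncomputable def CategoryTheory.ProjectiveResolution.ofExact {C : Type*} [Category.{v} C]
    [Abelian C] {Z : C} (K : ChainComplex C ℕ) (hK : ∀ n, Projective (K.X n)) (ε : K.X 0 ⟶ Z)
    (w : K.d 1 0 ≫ ε = 0) (h₀ : (ShortComplex.mk _ _ w).Exact) (hε : Epi ε)
    (h : ∀ n, K.ExactAt (n + 1)) : ProjectiveResolution Z where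
  complex := K
  projective := hK
  π := (ChainComplex.toSingle₀Equiv _ _).symm ⟨ε, w⟩
  quasiIso := ⟨fun n => by
    cases n with
    | zero =>
      rw [ChainComplex.quasiIsoAt₀_iff,
        ShortComplex.quasiIso_iff_of_zeros' _ (K.shape _ _ (by simp)) rfl rfl]
      refine (ShortComplex.exact_and_epi_g_iff_of_iso ?_).2 ⟨h₀, hε⟩
      exact ShortComplex.isoMk (Iso.refl _) (Iso.refl _) (Iso.refl _)
        ((Category.id_comp _).trans (Category.comp_id _).symm)
        ((Category.id_comp _).trans <|
          (ChainComplex.toSingle₀Equiv_symm_apply_f_zero _ _).symm.trans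
            (Category.comp_id _).symm)
    | succ n =>
      rw [quasiIsoAt_iff_exactAt' _ _ (ChainComplex.exactAt_succ_single_obj _ n)]
      exact h n⟩

namespace ChainComplex

section

variable {C : Type*} [Category.{v} C] [HasZeroMorphisms C] [CategoryWithHomology C]

lemma restriction_embeddingDownIntAdd_exactAt_iff (P : ChainComplex C ℤ) (k j : ℤ) :
    (P.restriction (ComplexShape.embeddingDownIntAdd k)).ExactAt j ↔ P.ExactAt (j + k) :=
  P.exactAt_restriction_iff _ (i := j + 1) (k := j - 1) (by simp [ChainComplex.prev])
    (by simp [ChainComplex.next]) (by simp [ChainComplex.prev]; ring)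
    (by simp [ChainComplex.next]; ring)

end

section

variable {C : Type*} [Category.{v} C] [Preadditive C] (P : ChainComplex C ℤ)

abbrev homComplex (M : C) : HomologicalComplex AddCommGrpCat.{v} (ComplexShape.down ℤ).symm :=
  ((preadditiveYoneda.obj M).mapHomologicalComplex _).obj P.op

lemma homComplex_restriction_embeddingDownIntAdd_exactAt_iff (k j : ℤ) (M : C) :
    (homComplex (P.restriction (ComplexShape.embeddingDownIntAdd k)) M).ExactAt j ↔
      (P.homComplex M).ExactAt (j + k) :=
  (P.homComplex M).exactAt_restriction_iff (ComplexShape.embeddingDownIntAdd k).op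
    (i := j - 1) (k := j + 1) (ComplexShape.prev_eq' _ (sub_add_cancel j 1))
    (ComplexShape.next_eq' _ rfl) (ComplexShape.prev_eq' _ (show j - 1 + k + 1 = j + k by ring))
    (ComplexShape.next_eq' _ (show j + k + 1 = j + 1 + k by ring))

noncomputable def homShortComplex (S : ShortComplex C) :
    ShortComplex (HomologicalComplex AddCommGrpCat.{v} (ComplexShape.down ℤ).symm) :=
  ShortComplex.mk ((NatTrans.mapHomologicalComplex (preadditiveYoneda.map S.f) _).app P.op)
    ((NatTrans.mapHomologicalComplex (preadditiveYoneda.map S.g) _).app P.op)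
    (by
      rw [← NatTrans.comp_app, ← NatTrans.mapHomologicalComplex_comp, ← Functor.map_comp,
        S.zero, Functor.map_zero]
      exact HomologicalComplex.hom_ext _ _ fun _ => NatTrans.app_zero _)

end

lemma homShortComplex_shortExact {C : Type*} [Category.{v} C] [Abelian C] (P : ChainComplex C ℤ)
    (hP : ∀ i, Projective (P.X i)) {S : ShortComplex C} (hS : S.ShortExact) :
    (P.homShortComplex S).ShortExact :=
  HomologicalComplex.shortExact_of_degreewise_shortExact _ fun i =>
    have := hP i
    hS.preadditiveYoneda_app_of_projective (P.X i)

noncomputable def cyclesZeroResolution {C : Type*} [Category.{v} C] [Abelian C]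
    (P : ChainComplex C ℤ) (hP : ∀ i, Projective (P.X i)) (hP' : ∀ i, P.ExactAt i) :
    ProjectiveResolution (P.cycles 0) :=
  ProjectiveResolution.ofExact (P.restriction (ComplexShape.embeddingDownIntGE 1)) (fun n => hP _)
    (P.toCycles 1 0) (P.d_toCycles 2 1 0)
    (P.exact_d_toCycles_of_exactAt (by simp [ChainComplex.prev]) (by simp [ChainComplex.next])
      (hP' 1))
    (P.epi_toCycles_of_exactAt (by simp [ChainComplex.prev]) (hP' 0))
    (fun n => (P.exactAt_restriction_iff _ (i := n + 2) (k := n) (by simp [ChainComplex.prev])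
      (by simp [ChainComplex.next_nat_succ]) (by simp [ChainComplex.prev]; ring)
      (by simp [ChainComplex.next]; ring)).2 (hP' _))

lemma extVanishes_one_cycles_zero_iff (P : ChainComplex (ModuleCat.{u} R) ℤ)
    (hP : ∀ i, Projective (P.X i)) (hP' : ∀ i, P.ExactAt i) (M : ModuleCat.{u} R) :
    extVanishes 1 (P.cycles 0) M ↔ (P.homComplex M).ExactAt 2 := by
  rw [extVanishes, ← ModuleCat.isZero_iff_subsingleton,
    ((P.cyclesZeroResolution hP hP').isoExt 1 M).isZero_iff,
    ← HomologicalComplex.exactAt_iff_isZero_homology,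
    HomologicalComplex.exactAt_iff' _ 0 1 2 (by simp) (by simp), ShortComplex.moduleCat_exact_iff,
    HomologicalComplex.exactAt_iff' _ 1 2 3 (ComplexShape.prev_eq' _ rfl)
      (ComplexShape.next_eq' _ rfl), ShortComplex.ab_exact_iff]
  -- Both sides say that every `f : P_2 ⟶ M` with `d_{3,2} ≫ f = 0` factors through `d_{2,1}`.
  exact Iff.rfl

end ChainComplex

lemma IsTotallyAcyclic.restriction {P : ChainComplex (ModuleCat.{u} R) ℤ}
    (hP : IsTotallyAcyclic P) (k : ℤ) :
    IsTotallyAcyclic (P.restriction (ComplexShape.embeddingDownIntAdd k)) :=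
  ⟨fun j => hP.1 (j + k),
    fun j => (P.restriction_embeddingDownIntAdd_exactAt_iff k j).2 (hP.2.1 _),
    fun Q hQ j =>
      (P.homComplex_restriction_embeddingDownIntAdd_exactAt_iff k j Q).2 (hP.2.2 Q hQ _)⟩

lemma extVanishes_of_iso {n : ℕ} {X Y M : ModuleCat.{u} R} (e : X ≅ Y)
    (h : extVanishes n Y M) : extVanishes n X M :=
  (((Ext ℤ (ModuleCat.{u} R) n).mapIso e.op).app M).toLinearEquiv.symm.toEquiv.subsingleton

lemma extVanishes_of_retract {n : ℕ} {X M M' : ModuleCat.{u} R} (i : M' ⟶ M) (p : M ⟶ M')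
    (hip : i ≫ p = 𝟙 M') (h : extVanishes n X M) : extVanishes n X M' := by
  let F := (Ext ℤ (ModuleCat.{u} R) n).obj (op X)
  have : Function.LeftInverse (F.map p) (F.map i) := fun x => by
    rw [← ModuleCat.comp_apply, ← F.map_comp, hip, F.map_id, ModuleCat.id_apply]
  exact this.injective.subsingleton

theorem memGPperp_iff_acyclic_homComplex (M : ModuleCat.{u} R) :
    MemGPperp M ↔ ∀ P, IsTotallyAcyclic P → (ChainComplex.homComplex P M).Acyclic := by
  constructor
  · intro hM P hP j
    let Q := P.restriction (ComplexShape.embeddingDownIntAdd (j - 2))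
    have hQ : IsTotallyAcyclic Q := hP.restriction (j - 2)
    have hQM := (ChainComplex.extVanishes_one_cycles_zero_iff Q hQ.1 hQ.2.1 M).1
      (hM _ ⟨Q, hQ, ⟨Iso.refl _⟩⟩)
    rwa [ChainComplex.homComplex_restriction_embeddingDownIntAdd_exactAt_iff, add_sub_cancel]
      at hQM
  · rintro h X ⟨P, hP, ⟨e⟩⟩
    exact extVanishes_of_iso e ((P.extVanishes_one_cycles_zero_iff hP.1 hP.2.1 M).2 (h P hP 2))

/-- `GP^⊥` is thick: closed under direct summands, and satisfies two-out-of-three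
for short exact sequences. -/
theorem gpPerp_thick :
    (∀ M M' : ModuleCat.{u} R, MemGPperp M →
      (∃ (i : M' ⟶ M) (p : M ⟶ M'), i ≫ p = 𝟙 M') → MemGPperp M') ∧
    (∀ S : ShortComplex (ModuleCat.{u} R), S.ShortExact →
      ((MemGPperp S.X₁ → MemGPperp S.X₂ → MemGPperp S.X₃) ∧
       (MemGPperp S.X₁ → MemGPperp S.X₃ → MemGPperp S.X₂) ∧
       (MemGPperp S.X₂ → MemGPperp S.X₃ → MemGPperp S.X₁))) := by
  refine ⟨fun M M' hM ⟨i, p, hip⟩ X hX => extVanishes_of_retract i p hip (hM X hX),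
    fun S hS => ?_⟩
  simp only [memGPperp_iff_acyclic_homComplex]
  refine ⟨fun h₁ h₂ P hP => ?_, fun h₁ h₃ P hP => ?_, fun h₂ h₃ P hP => ?_⟩ <;>
    have hHom := P.homShortComplex_shortExact hP.1 hS
  · exact hHom.acyclic_X₃_of_acyclic (h₁ P hP) (h₂ P hP)
  · exact hHom.acyclic_X₂ (h₁ P hP) (h₃ P hP)
  · exact hHom.acyclic_X₁_of_acyclic (h₂ P hP) (h₃ P hP)
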